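/- Let $u$ and $v$ be smooth complex-valued functions on a Kähler manifold such that $U=\nabla^{1,0}u$ and $V=\nabla^{1,0}v$ are holomorphic vector fields with $[U,V]=0$ (Lie bracket extended complex-linearly). Then the function $(\nabla^{1,0}v - \nabla^{0,1}v)(u) = g^{i\bar\jmath}(u_i v_{\bar\jmath} - u_{\bar\jmath}v_i)$ is holomorphic. -/

import Mathlib

/-- Wirtinger derivative `∂f/∂z_i` on `ℂⁿ`. -/
noncomputable def wd (n : ℕ) (i : Fin n) (f : (Fin n → ℂ) → ℂ) : (Fin n → ℂ) → ℂ :=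
  fun x => (1 / 2 : ℂ) *
    (fderiv ℝ f x (Pi.single i 1) - Complex.I * fderiv ℝ f x (Pi.single i Complex.I))

/-- Conjugate Wirtinger derivative `∂f/∂z̄_i` on `ℂⁿ`. -/
noncomputable def wdbar (n : ℕ) (i : Fin n) (f : (Fin n → ℂ) → ℂ) : (Fin n → ℂ) → ℂ :=
  fun x => (1 / 2 : ℂ) *
    (fderiv ℝ f x (Pi.single i 1) + Complex.I * fderiv ℝ f x (Pi.single i Complex.I))


open Complex

variable {n : ℕ}

/-- second partial, as a plain function. -/
noncomputable def d2 (f : (Fin n → ℂ) → ℂ) (x v w : Fin n → ℂ) : ℂ :=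
  fderiv ℝ (fun y => fderiv ℝ f y w) x v

lemma contDiff_fderiv_apply {f : (Fin n → ℂ) → ℂ} (hf : ContDiff ℝ (⊤ : ℕ∞) f) (w : Fin n → ℂ) :
    ContDiff ℝ (⊤ : ℕ∞) (fun x => fderiv ℝ f x w) := by
  exact (ContinuousLinearMap.apply ℝ ℂ w).contDiff.comp (hf.fderiv_right (by simp))

lemma contDiff_wd {f : (Fin n → ℂ) → ℂ} (hf : ContDiff ℝ (⊤ : ℕ∞) f) (i : Fin n) :
    ContDiff ℝ (⊤ : ℕ∞) (wd n i f) := by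
  unfold wd
  exact contDiff_const.mul ((contDiff_fderiv_apply hf _).sub
    (contDiff_const.mul (contDiff_fderiv_apply hf _)))

lemma contDiff_wdbar {f : (Fin n → ℂ) → ℂ} (hf : ContDiff ℝ (⊤ : ℕ∞) f) (i : Fin n) :
    ContDiff ℝ (⊤ : ℕ∞) (wdbar n i f) := by
  unfold wdbar
  exact contDiff_const.mul ((contDiff_fderiv_apply hf _).add
    (contDiff_const.mul (contDiff_fderiv_apply hf _)))

lemma d2_symm {f : (Fin n → ℂ) → ℂ} (hf : ContDiff ℝ (⊤ : ℕ∞) f) (x v w : Fin n → ℂ) :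
    d2 f x v w = d2 f x w v := by
  have hdf : Differentiable ℝ (fderiv ℝ f) := (hf.fderiv_right (m := 1) (WithTop.coe_le_coe.mpr le_top)).differentiable one_ne_zero
  have key : ∀ a, fderiv ℝ (fun y => fderiv ℝ f y a) x = (fderiv ℝ (fderiv ℝ f) x).flip a := by
    intro a
    have := fderiv_clm_apply (c := fderiv ℝ f) (u := fun _ => a) (hdf x) (differentiableAt_const a)
    simpa [fderiv_const] using this
  have hsym := second_derivative_symmetric (f := f) (f' := fderiv ℝ f)
    (f'' := fderiv ℝ (fderiv ℝ f) x) (x := x)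
    (fun y => ((hf.differentiable (by simp)) y).hasFDerivAt) (hdf x).hasFDerivAt v w
  simp only [d2, key]
  simpa [ContinuousLinearMap.flip_apply] using hsym

lemma fderiv_wd_apply {f : (Fin n → ℂ) → ℂ} (hf : ContDiff ℝ (⊤ : ℕ∞) f) (i : Fin n) (x w : Fin n → ℂ) :
    fderiv ℝ (wd n i f) x w
      = (1 / 2 : ℂ) * (d2 f x w (Pi.single i 1) - Complex.I * d2 f x w (Pi.single i Complex.I)) := by
  have hg := ((contDiff_fderiv_apply hf (Pi.single i 1)).differentiable (by simp) x).hasFDerivAt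
  have hh := ((contDiff_fderiv_apply hf (Pi.single i Complex.I)).differentiable (by simp) x).hasFDerivAt
  have H : HasFDerivAt (wd n i f)
      ((1 / 2 : ℂ) • (fderiv ℝ (fun y => fderiv ℝ f y (Pi.single i 1)) x
        - Complex.I • fderiv ℝ (fun y => fderiv ℝ f y (Pi.single i Complex.I)) x)) x :=
    (hg.sub (hh.const_mul Complex.I)).const_mul _
  rw [H.fderiv]
  simp [d2, smul_eq_mul]

lemma fderiv_wdbar_apply {f : (Fin n → ℂ) → ℂ} (hf : ContDiff ℝ (⊤ : ℕ∞) f) (i : Fin n) (x w : Fin n → ℂ) :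
    fderiv ℝ (wdbar n i f) x w
      = (1 / 2 : ℂ) * (d2 f x w (Pi.single i 1) + Complex.I * d2 f x w (Pi.single i Complex.I)) := by
  have hg := ((contDiff_fderiv_apply hf (Pi.single i 1)).differentiable (by simp) x).hasFDerivAt
  have hh := ((contDiff_fderiv_apply hf (Pi.single i Complex.I)).differentiable (by simp) x).hasFDerivAt
  have H : HasFDerivAt (wdbar n i f)
      ((1 / 2 : ℂ) • (fderiv ℝ (fun y => fderiv ℝ f y (Pi.single i 1)) x
        + Complex.I • fderiv ℝ (fun y => fderiv ℝ f y (Pi.single i Complex.I)) x)) x :=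
    (hg.add (hh.const_mul Complex.I)).const_mul _
  rw [H.fderiv]
  simp [d2, smul_eq_mul]
  ring

lemma wdbar_wd_comm {f : (Fin n → ℂ) → ℂ} (hf : ContDiff ℝ (⊤ : ℕ∞) f) (i j : Fin n) (x : Fin n → ℂ) :
    wdbar n j (wd n i f) x = wd n i (wdbar n j f) x := by
  rw [wdbar, wd, fderiv_wd_apply hf, fderiv_wd_apply hf, fderiv_wdbar_apply hf,
    fderiv_wdbar_apply hf,
    d2_symm hf x (Pi.single i 1) (Pi.single j 1),
    d2_symm hf x (Pi.single i 1) (Pi.single j Complex.I),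
    d2_symm hf x (Pi.single i Complex.I) (Pi.single j 1),
    d2_symm hf x (Pi.single i Complex.I) (Pi.single j Complex.I)]
  ring

lemma wdbar_sum (j : Fin n) (t : Fin n → (Fin n → ℂ) → ℂ)
    (ht : ∀ i, ContDiff ℝ (⊤ : ℕ∞) (t i)) (x : Fin n → ℂ) :
    wdbar n j (fun y => ∑ i, t i y) x = ∑ i, wdbar n j (t i) x := by
  have H : HasFDerivAt (fun y => ∑ i, t i y) (∑ i, fderiv ℝ (t i) x) x :=
    HasFDerivAt.fun_sum fun i _ => ((ht i).differentiable (by simp) x).hasFDerivAt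
  rw [wdbar, H.fderiv]
  simp [wdbar, Finset.mul_sum, Finset.sum_add_distrib, mul_add]

lemma wdbar_sub (j : Fin n) (g h : (Fin n → ℂ) → ℂ)
    (hg : ContDiff ℝ (⊤ : ℕ∞) g) (hh : ContDiff ℝ (⊤ : ℕ∞) h) (x : Fin n → ℂ) :
    wdbar n j (fun y => g y - h y) x = wdbar n j g x - wdbar n j h x := by
  have H : HasFDerivAt (fun y => g y - h y) (fderiv ℝ g x - fderiv ℝ h x) x :=
    ((hg.differentiable (by simp) x).hasFDerivAt).sub ((hh.differentiable (by simp) x).hasFDerivAt)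
  rw [wdbar, H.fderiv]
  simp [wdbar]
  ring

lemma wdbar_mul (j : Fin n) (g h : (Fin n → ℂ) → ℂ)
    (hg : ContDiff ℝ (⊤ : ℕ∞) g) (hh : ContDiff ℝ (⊤ : ℕ∞) h) (x : Fin n → ℂ) :
    wdbar n j (fun y => g y * h y) x = wdbar n j g x * h x + g x * wdbar n j h x := by
  have H : HasFDerivAt (fun y => g y * h y)
      (g x • fderiv ℝ h x + h x • fderiv ℝ g x) x :=
    ((hg.differentiable (by simp) x).hasFDerivAt).mul ((hh.differentiable (by simp) x).hasFDerivAt)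
  rw [wdbar, H.fderiv]
  simp [wdbar, smul_eq_mul]
  ring

lemma holo_of_wdbar_eq_zero {f : (Fin n → ℂ) → ℂ} (hf : ContDiff ℝ (⊤ : ℕ∞) f)
    (h : ∀ j x, wdbar n j f x = 0) : Differentiable ℂ f := by
  intro x
  set L := fderiv ℝ f x with hLdef
  have hL : HasFDerivAt f L x := (hf.differentiable (by simp) x).hasFDerivAt
  have hIb : ∀ j, L (Pi.single j Complex.I) = Complex.I * L (Pi.single j 1) := by
    intro j
    have h0 := h j x
    rw [wdbar] at h0
    have h1 : L (Pi.single j 1) + Complex.I * L (Pi.single j Complex.I) = 0 := by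
      field_simp at h0
      simpa [hLdef] using h0
    linear_combination (-Complex.I) * h1 + L (Pi.single j Complex.I) * Complex.I_sq
  set L' : (Fin n → ℂ) →L[ℂ] ℂ :=
    ∑ j, L (Pi.single j 1) • ContinuousLinearMap.proj j with hL'def
  have hLL' : ∀ y, L' y = L y := by
    intro y
    have hy : (∑ j, Pi.single j (y j)) = y := Finset.univ_sum_single y
    have hsingle : ∀ j : Fin n, (Pi.single j (y j) : Fin n → ℂ)
        = (y j).re • (Pi.single j (1 : ℂ) : Fin n → ℂ)
          + (y j).im • (Pi.single j Complex.I : Fin n → ℂ) := by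
      intro j
      rw [← Pi.single_smul, ← Pi.single_smul, ← Pi.single_add]
      simp [Complex.real_smul]
    calc L' y = ∑ j, y j * L (Pi.single j 1) := by
          simp [hL'def, smul_eq_mul, mul_comm]
      _ = ∑ j, L (Pi.single j (y j)) := by
          refine Finset.sum_congr rfl fun j _ => ?_
          rw [hsingle j, map_add, map_smul, map_smul, hIb j, Complex.real_smul,
            Complex.real_smul]
          conv_lhs => rw [← Complex.re_add_im (y j)]
          ring
      _ = L (∑ j, Pi.single j (y j)) := (map_sum L _ _).symm
      _ = L y := by rw [hy]
  have hres : (L'.restrictScalars ℝ) = L := ContinuousLinearMap.ext fun y => hLL' y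
  have hL2 : HasFDerivAt f L' x := by
    rw [hasFDerivAt_iff_isLittleO_nhds_zero]
    have := hasFDerivAt_iff_isLittleO_nhds_zero.mp hL
    simpa [← hres] using this
  exact hL2.differentiableAt

/-- Let `u, v` be smooth complex-valued functions on a Kähler manifold
(modelled in normal coordinates by flat `ℂⁿ`, where `g^{i\bar ȷ} = δ_{ij}`) such that
`U = ∇^{1,0}u` and `V = ∇^{1,0}v` are holomorphic vector fields with `[U, V] = 0`. Then
`(∇^{1,0}v - ∇^{0,1}v)(u) = g^{i\bar ȷ}(u_i v_{\bar ȷ} - u_{\bar ȷ} v_i)` is holomorphic. -/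
theorem stmt_9 (n : ℕ) (u v : (Fin n → ℂ) → ℂ)
    (hu : ContDiff ℝ (⊤ : ℕ∞) u) (hv : ContDiff ℝ (⊤ : ℕ∞) v)
    -- holomorphy of `U = ∇^{1,0}u` (components `u_{\bar i}` are holomorphic):
    (hU : ∀ i j : Fin n, ∀ x, wdbar n j (wdbar n i u) x = 0)
    (hV : ∀ i j : Fin n, ∀ x, wdbar n j (wdbar n i v) x = 0)
    -- `[U, V] = 0`:
    (hcomm : ∀ (i : Fin n) (x : Fin n → ℂ),
        (∑ k, wdbar n k u x * wd n k (wdbar n i v) x)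
          = ∑ k, wdbar n k v x * wd n k (wdbar n i u) x) :
    Differentiable ℂ
      (fun x => ∑ i, (wd n i u x * wdbar n i v x - wdbar n i u x * wd n i v x)) := by
  have hterm : ∀ i : Fin n, ContDiff ℝ (⊤ : ℕ∞)
      (fun y => wd n i u y * wdbar n i v y - wdbar n i u y * wd n i v y) :=
    fun i => ((contDiff_wd hu i).mul (contDiff_wdbar hv i)).sub
      ((contDiff_wdbar hu i).mul (contDiff_wd hv i))
  refine holo_of_wdbar_eq_zero (ContDiff.sum fun i _ => hterm i) ?_
  intro j x
  rw [wdbar_sum j _ hterm x]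
  have e1 : ∀ i : Fin n,
      wdbar n j (fun y => wd n i u y * wdbar n i v y - wdbar n i u y * wd n i v y) x
        = wdbar n i v x * wd n i (wdbar n j u) x - wdbar n i u x * wd n i (wdbar n j v) x := by
    intro i
    rw [wdbar_sub j _ _ ((contDiff_wd hu i).mul (contDiff_wdbar hv i))
        ((contDiff_wdbar hu i).mul (contDiff_wd hv i)),
      wdbar_mul j _ _ (contDiff_wd hu i) (contDiff_wdbar hv i),
      wdbar_mul j _ _ (contDiff_wdbar hu i) (contDiff_wd hv i),
      hU i j x, hV i j x, wdbar_wd_comm hu i j x, wdbar_wd_comm hv i j x]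
    ring
  rw [Finset.sum_congr rfl fun i _ => e1 i, Finset.sum_sub_distrib, ← hcomm j x, sub_self]
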